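/- arXiv:2602.10989 — 3 statements merged into one kernel-verified Lean document; each statement's English description precedes it below -/
import Mathlib

section
/- Under the exponential tail bound, for every t ∈ (0,1) the map x ↦ E[x⋆ | x_t = x] is differentiable on ℝᵈ and its Jacobian satisfies ∇_x E[x⋆ | x_t = x] = (β(t)/(t σ(t)²)) · (P_t(x) Q_t(x) − R_t(x) R_t(x)ᵀ)/Q_t(x)², where, with weight w_t(x,y) = exp(−β(t)²|y|²/(2tσ(t)²) + β(t) (y·x)/(tσ(t)²)), we set P_t(x) = ∫ y yᵀ ρ⋆(y) w_t(x,y) dy, Q_t(x) = ∫ ρ⋆(y) w_t(x,y) dy, and R_t(x) = ∫ y ρ⋆(y) w_t(x,y) dy; the matrix (P_t Q_t − R_t R_tᵀ)/Q_t² is the conditional covariance of x⋆ given x_t = x. -/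
/-!
Write the weight as `exp (-a ‖y‖²) * exp ⟪y, c • x⟫` with `a = β²/(2tσ²) > 0` and
`c = β/(tσ²)`. Then `E[x⋆ | x_t = x]` is the mean of the exponentially tilted measure
`exp ⟪y, c • x⟫ g(y) dy`, where `g = ρ⋆ exp (-a ‖y‖²)`. The Gaussian factor dominates every
`exp (b ‖y‖)`, so `g` has all exponential moments, and the Laplace transforms
`x ↦ ∫ exp ⟪y, x⟫ g(y) dy` and `x ↦ ∫ exp ⟪y, x⟫ g(y) y dy` may be differentiated under the
integral sign. The quotient rule then turns the derivative of the tilted mean into the tilted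
covariance, and the chain rule through `x ↦ c • x` produces the factor `β/(tσ²)`.
-/

open MeasureTheory Real Filter Set
open scoped Topology

noncomputable section

/-- The Gaussian reweighting factor appearing in the conditional mean
`E[x⋆ | x_t = x]` for the stochastic interpolant `x_t = β(t) x⋆ + σ(t) √t z`. -/
def interpWeight {d : ℕ} (β σ : ℝ → ℝ) (t : ℝ) (x y : EuclideanSpace ℝ (Fin d)) : ℝ :=
  Real.exp (-(β t) ^ 2 * ‖y‖ ^ 2 / (2 * t * σ t ^ 2) + β t * (inner ℝ y x : ℝ) / (t * σ t ^ 2))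

/-- The conditional mean `E[x⋆ | x_t = x]`. -/
def condMean {d : ℕ} (ρ : EuclideanSpace ℝ (Fin d) → ℝ) (β σ : ℝ → ℝ) (t : ℝ)
    (x : EuclideanSpace ℝ (Fin d)) : EuclideanSpace ℝ (Fin d) :=
  (∫ y, ρ y * interpWeight β σ t x y)⁻¹ • ∫ y, (ρ y * interpWeight β σ t x y) • y

open scoped RealInnerProductSpace

lemma mul_sub_mul_sq_le {a : ℝ} (ha : 0 < a) (b r : ℝ) : b * r - a * r ^ 2 ≤ b ^ 2 / (4 * a) := by
  rw [le_div_iff₀ (by positivity)]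
  nlinarith [sq_nonneg (2 * a * r - b)]

lemma exp_inner_mul_norm_le {E : Type*} [NormedAddCommGroup E] [InnerProductSpace ℝ E]
    {x₀ x : E} (hx : x ∈ Metric.ball x₀ 1) (y : E) :
    Real.exp ⟪y, x⟫ * ‖y‖ ≤ Real.exp ((‖x₀‖ + 2) * ‖y‖) := by
  have hx : ‖x‖ ≤ ‖x₀‖ + 1 := by
    have := norm_le_norm_add_norm_sub' x x₀
    rw [Metric.mem_ball, dist_eq_norm] at hx
    linarith
  calc Real.exp ⟪y, x⟫ * ‖y‖ ≤ Real.exp ((‖x₀‖ + 1) * ‖y‖) * Real.exp ‖y‖ := by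
        gcongr
        · calc ⟪y, x⟫ ≤ ‖y‖ * ‖x‖ := real_inner_le_norm y x
            _ ≤ (‖x₀‖ + 1) * ‖y‖ := by rw [mul_comm]; gcongr
        · linarith [Real.add_one_le_exp ‖y‖]
    _ = Real.exp ((‖x₀‖ + 2) * ‖y‖) := by rw [← Real.exp_add]; ring_nf

lemma integral_mul_pos_of_integral_pos {α : Type*} [MeasurableSpace α] {μ : Measure α}
    {ρ w : α → ℝ} (hρ : 0 ≤ ρ) (hρ_pos : 0 < ∫ y, ρ y ∂μ) (hw : ∀ y, 0 < w y)
    (hρw : Integrable (fun y => ρ y * w y) μ) : 0 < ∫ y, ρ y * w y ∂μ := by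
  have hsupp : Function.support (fun y => ρ y * w y) = Function.support ρ := by
    ext y
    simp [(hw y).ne']
  rw [integral_pos_iff_support_of_nonneg (fun y => mul_nonneg (hρ y) (hw y).le) hρw, hsupp,
    ← integral_pos_iff_support_of_nonneg hρ (Integrable.of_integral_ne_zero hρ_pos.ne')]
  exact hρ_pos

section ExpIntegrable

variable {E F : Type*} [NormedAddCommGroup E] [MeasurableSpace E] [NormedAddCommGroup F]
  [NormedSpace ℝ F] {μ : Measure E}

def ExpIntegrable (f : E → F) (μ : Measure E) : Prop :=
  ∀ b : ℝ, Integrable (fun y => Real.exp (b * ‖y‖) • f y) μ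

lemma ExpIntegrable.integrable {f : E → F} (hf : ExpIntegrable f μ) : Integrable f μ := by
  simpa using hf 0

variable [OpensMeasurableSpace E]

lemma expIntegrable_mul_exp_neg_mul_sq {ρ : E → ℝ} (hρ : Integrable ρ μ) {a : ℝ} (ha : 0 < a) :
    ExpIntegrable (fun y => ρ y * Real.exp (-a * ‖y‖ ^ 2)) μ := by
  intro b
  refine (hρ.norm.const_mul (Real.exp (b ^ 2 / (4 * a)))).mono' ?_ (ae_of_all _ fun y => ?_)
  · exact (by fun_prop : Continuous fun y : E => Real.exp (b * ‖y‖)).aestronglyMeasurable.smul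
      (hρ.aestronglyMeasurable.mul
        (by fun_prop : Continuous fun y : E => Real.exp (-a * ‖y‖ ^ 2)).aestronglyMeasurable)
  · simp only [norm_smul, norm_mul, Real.norm_eq_abs, Real.abs_exp]
    calc Real.exp (b * ‖y‖) * (|ρ y| * Real.exp (-a * ‖y‖ ^ 2))
        = Real.exp (b * ‖y‖ - a * ‖y‖ ^ 2) * |ρ y| := by
          rw [sub_eq_add_neg, Real.exp_add]; ring_nf
      _ ≤ Real.exp (b ^ 2 / (4 * a)) * |ρ y| := by gcongr; exact mul_sub_mul_sq_le ha b ‖y‖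

variable [InnerProductSpace ℝ E]

lemma ExpIntegrable.integrable_exp_inner_smul {f : E → F} (hf : ExpIntegrable f μ) (x : E) :
    Integrable (fun y => Real.exp ⟪y, x⟫ • f y) μ := by
  refine (hf ‖x‖).mono ?_ (ae_of_all _ fun y => ?_)
  · exact (by fun_prop : Continuous fun y : E => Real.exp ⟪y, x⟫).aestronglyMeasurable.smul
      hf.integrable.aestronglyMeasurable
  · simp only [norm_smul, Real.norm_eq_abs, Real.abs_exp]
    gcongr
    exact (real_inner_le_norm y x).trans_eq (mul_comm _ _)

variable [SecondCountableTopology E]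

lemma ExpIntegrable.smul_self {g : E → ℝ} (hg : ExpIntegrable g μ) :
    ExpIntegrable (fun y => g y • y) μ := by
  intro b
  refine (hg (b + 1)).mono ?_ (ae_of_all _ fun y => ?_)
  · simp_rw [← smul_assoc]
    exact (hg b).aestronglyMeasurable.smul aestronglyMeasurable_id
  · have hy : ‖y‖ ≤ Real.exp ‖y‖ := by linarith [Real.add_one_le_exp ‖y‖]
    simp only [norm_smul, Real.norm_eq_abs, abs_mul, Real.abs_exp, add_mul, one_mul, Real.exp_add]
    calc Real.exp (b * ‖y‖) * (|g y| * ‖y‖) ≤ Real.exp (b * ‖y‖) * (|g y| * Real.exp ‖y‖) := by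
          gcongr
      _ = Real.exp (b * ‖y‖) * Real.exp ‖y‖ * |g y| := by ring

theorem ExpIntegrable.hasFDerivAt_integral_exp_inner_smul {f : E → F} (hf : ExpIntegrable f μ)
    (x₀ : E) : ∃ L : E →L[ℝ] F, HasFDerivAt (fun x => ∫ y, Real.exp ⟪y, x⟫ • f y ∂μ) L x₀ ∧
      ∀ v, L v = ∫ y, (Real.exp ⟪y, x₀⟫ * ⟪y, v⟫) • f y ∂μ := by
  set F' : E → E → E →L[ℝ] F := fun x y => (Real.exp ⟪y, x⟫ • innerSL ℝ y).smulRight (f y)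
  have hF'_le : ∀ y, ∀ x ∈ Metric.ball x₀ 1, ‖F' x y‖ ≤ ‖Real.exp ((‖x₀‖ + 2) * ‖y‖) • f y‖ := by
    intro y x hx
    simp only [F', ContinuousLinearMap.norm_smulRight_apply, norm_smul, innerSL_apply_norm,
      Real.norm_eq_abs, Real.abs_exp]
    gcongr
    exact exp_inner_mul_norm_le hx y
  have hF'_meas : AEStronglyMeasurable (F' x₀) μ :=
    (ContinuousLinearMap.smulRightL ℝ E F).continuous₂.comp_aestronglyMeasurable₂
      (by fun_prop : Continuous fun y : E => Real.exp ⟪y, x₀⟫ • innerSL ℝ y).aestronglyMeasurable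
      hf.integrable.aestronglyMeasurable
  have hF'_int : Integrable (F' x₀) μ :=
    (hf _).norm.mono' hF'_meas (ae_of_all _ fun y => hF'_le y x₀ (Metric.mem_ball_self one_pos))
  have hderiv := hasFDerivAt_integral_of_dominated_of_fderiv_le (Metric.ball_mem_nhds x₀ one_pos)
    (Eventually.of_forall fun x => (hf.integrable_exp_inner_smul x).aestronglyMeasurable)
    (hf.integrable_exp_inner_smul x₀) hF'_meas (ae_of_all _ hF'_le) (hf _).norm
    (ae_of_all _ fun y x _ => (innerSL ℝ y).hasFDerivAt.exp.smul_const (f y))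
  refine ⟨_, hderiv, fun v => ?_⟩
  rw [ContinuousLinearMap.integral_apply hF'_int]
  simp [F']

end ExpIntegrable

section TiltedMean

variable {E : Type*} [NormedAddCommGroup E] [InnerProductSpace ℝ E] [CompleteSpace E]
  [MeasurableSpace E] [OpensMeasurableSpace E] [SecondCountableTopology E] {μ : Measure E}

def tiltedMean (μ : Measure E) (g : E → ℝ) (x : E) : E :=
  (∫ y, Real.exp ⟪y, x⟫ * g y ∂μ)⁻¹ • ∫ y, (Real.exp ⟪y, x⟫ * g y) • y ∂μ

theorem ExpIntegrable.hasFDerivAt_tiltedMean {g : E → ℝ} (hg : ExpIntegrable g μ) {x₀ : E}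
    (hZ : ∫ y, Real.exp ⟪y, x₀⟫ * g y ∂μ ≠ 0) :
    ∃ L : E →L[ℝ] E, HasFDerivAt (tiltedMean μ g) L x₀ ∧ ∀ v,
      L v = ((∫ y, Real.exp ⟪y, x₀⟫ * g y ∂μ) ^ 2)⁻¹ •
        ((∫ y, Real.exp ⟪y, x₀⟫ * g y ∂μ) • ∫ y, (Real.exp ⟪y, x₀⟫ * g y * ⟪y, v⟫) • y ∂μ -
          ⟪∫ y, (Real.exp ⟪y, x₀⟫ * g y) • y ∂μ, v⟫ • ∫ y, (Real.exp ⟪y, x₀⟫ * g y) • y ∂μ) := by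
  obtain ⟨Z', hZ', hZ'v⟩ := hg.hasFDerivAt_integral_exp_inner_smul x₀
  obtain ⟨M', hM', hM'v⟩ := hg.smul_self.hasFDerivAt_integral_exp_inner_smul x₀
  have hM : ∀ x, ∫ y, Real.exp ⟪y, x⟫ • g y • y ∂μ = ∫ y, (Real.exp ⟪y, x⟫ * g y) • y ∂μ :=
    fun x => by simp_rw [smul_smul]
  have hM_int : Integrable (fun y => (Real.exp ⟪y, x₀⟫ * g y) • y) μ := by
    simpa only [smul_smul] using hg.smul_self.integrable_exp_inner_smul x₀
  simp only [hM, smul_eq_mul] at hM' hZ' hZ'v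
  refine ⟨_, ((hasDerivAt_inv hZ).comp_hasFDerivAt x₀ hZ').smul hM', fun v => ?_⟩
  have hZ'_eq : Z' v = ⟪∫ y, (Real.exp ⟪y, x₀⟫ * g y) • y ∂μ, v⟫ := by
    rw [hZ'v, real_inner_comm, ← integral_inner hM_int]
    congr 1 with y
    rw [real_inner_smul_right, real_inner_comm y v]
    ring
  have hM'_eq : M' v = ∫ y, (Real.exp ⟪y, x₀⟫ * g y * ⟪y, v⟫) • y ∂μ := by
    rw [hM'v]
    congr 1 with y
    rw [smul_smul, mul_right_comm]
  simp only [add_apply, smul_apply, ContinuousLinearMap.smulRight_apply, Function.comp_apply,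
    smul_eq_mul, hZ'_eq, hM'_eq]
  match_scalars <;> field_simp

end TiltedMean

lemma interpWeight_eq_exp_inner_mul_exp {d : ℕ} (β σ : ℝ → ℝ) (t : ℝ)
    (x y : EuclideanSpace ℝ (Fin d)) :
    interpWeight β σ t x y = Real.exp ⟪y, (β t / (t * σ t ^ 2)) • x⟫ *
      Real.exp (-(β t ^ 2 / (2 * t * σ t ^ 2)) * ‖y‖ ^ 2) := by
  rw [interpWeight, ← Real.exp_add, real_inner_smul_right]
  ring_nf

theorem conditional_mean_jacobian_general {d : ℕ} (ρ : EuclideanSpace ℝ (Fin d) → ℝ) (β σ : ℝ → ℝ)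
    (hβC : ContDiff ℝ 1 β) (hσC : ContDiff ℝ 1 σ)
    (hβ0 : β 0 = 0) (hσ1 : σ 1 = 0)
    (hβ' : ∀ t ∈ Icc (0:ℝ) 1, 0 < deriv β t)
    (hσ' : ∀ t ∈ Icc (0:ℝ) 1, deriv σ t < 0)
    (hρnn : ∀ y, 0 ≤ ρ y) (hρ1 : ∫ y, ρ y = 1) :
    ∀ t ∈ Ioo (0:ℝ) 1, ∀ x : EuclideanSpace ℝ (Fin d),
      ∃ L : EuclideanSpace ℝ (Fin d) →L[ℝ] EuclideanSpace ℝ (Fin d),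
        HasFDerivAt (fun x' => condMean ρ β σ t x') L x ∧
        ∀ v : EuclideanSpace ℝ (Fin d),
          L v = (β t / (t * σ t ^ 2)) •
            (((∫ y, ρ y * interpWeight β σ t x y) ^ 2)⁻¹ •
              ((∫ y, ρ y * interpWeight β σ t x y) •
                  (∫ y, (ρ y * interpWeight β σ t x y * (inner ℝ y v : ℝ)) • y) -
                (inner ℝ (∫ y, (ρ y * interpWeight β σ t x y) • y) v : ℝ) •
                  (∫ y, (ρ y * interpWeight β σ t x y) • y))) := by
  rintro t ⟨ht0, ht1⟩ x₀
  have hβt : 0 < β t := hβ0 ▸ strictMonoOn_of_deriv_pos (convex_Icc 0 1)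
    hβC.continuous.continuousOn (fun s hs => hβ' s (interior_subset hs))
    (left_mem_Icc.2 zero_le_one) ⟨ht0.le, ht1.le⟩ ht0
  have hσt : 0 < σ t := hσ1 ▸ strictAntiOn_of_deriv_neg (convex_Icc 0 1)
    hσC.continuous.continuousOn (fun s hs => hσ' s (interior_subset hs))
    ⟨ht0.le, ht1.le⟩ (right_mem_Icc.2 zero_le_one) ht1
  set c := β t / (t * σ t ^ 2)
  set g := fun y : EuclideanSpace ℝ (Fin d) =>
    ρ y * Real.exp (-(β t ^ 2 / (2 * t * σ t ^ 2)) * ‖y‖ ^ 2) with hg_def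
  have hw : ∀ x y, ρ y * interpWeight β σ t x y = Real.exp ⟪y, c • x⟫ * g y := fun x y => by
    rw [interpWeight_eq_exp_inner_mul_exp, hg_def]; ring
  have hg : ExpIntegrable g volume := expIntegrable_mul_exp_neg_mul_sq
    (Integrable.of_integral_ne_zero (hρ1 ▸ one_ne_zero)) (by positivity)
  have hZ : 0 < ∫ y, Real.exp ⟪y, c • x₀⟫ * g y := by
    simp_rw [← hw]
    exact integral_mul_pos_of_integral_pos hρnn (hρ1 ▸ one_pos) (fun y => Real.exp_pos _)
      (by simpa only [hw, smul_eq_mul] using hg.integrable_exp_inner_smul (c • x₀))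
  obtain ⟨L, hL, hLv⟩ := hg.hasFDerivAt_tiltedMean hZ.ne'
  have hcond : condMean ρ β σ t = fun x => tiltedMean volume g (c • x) := by
    funext x
    simp only [condMean, tiltedMean, hw]
  refine ⟨L.comp (c • ContinuousLinearMap.id ℝ _), ?_, fun v => ?_⟩
  · rw [hcond]
    exact hL.comp x₀ ((hasFDerivAt_id x₀).const_smul c)
  · simp only [hw, ContinuousLinearMap.comp_apply, smul_apply, ContinuousLinearMap.id_apply]
    rw [map_smul, hLv]

/-- under the exponential tail bound, for every `t ∈ (0,1)` the map
`x ↦ E[x⋆ | x_t = x]` is differentiable and its Jacobian equals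
`(β(t)/(t σ(t)²)) (P_t Q_t − R_t R_tᵀ)/Q_t²`. -/
theorem conditional_mean_jacobian {d : ℕ} (ρ : EuclideanSpace ℝ (Fin d) → ℝ) (β σ : ℝ → ℝ)
    (hβC : ContDiff ℝ 1 β) (hσC : ContDiff ℝ 1 σ)
    (hβ0 : β 0 = 0) (hβ1 : β 1 = 1) (hσ0 : 0 < σ 0) (hσ1 : σ 1 = 0)
    (hβ' : ∀ t ∈ Icc (0:ℝ) 1, 0 < deriv β t)
    (hσ' : ∀ t ∈ Icc (0:ℝ) 1, deriv σ t < 0)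
    (hρnn : ∀ y, 0 ≤ ρ y) (hρ1 : ∫ y, ρ y = 1)
    (C₁ C₂ : ℝ) (hC₁ : 0 < C₁) (hC₂ : 0 < C₂)
    (htail : ∀ y, ρ y ≤ C₂ * Real.exp (-C₁ * ‖y‖)) :
    ∀ t ∈ Ioo (0:ℝ) 1, ∀ x : EuclideanSpace ℝ (Fin d),
      ∃ L : EuclideanSpace ℝ (Fin d) →L[ℝ] EuclideanSpace ℝ (Fin d),
        HasFDerivAt (fun x' => condMean ρ β σ t x') L x ∧
        ∀ v : EuclideanSpace ℝ (Fin d),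
          L v = (β t / (t * σ t ^ 2)) •
            (((∫ y, ρ y * interpWeight β σ t x y) ^ 2)⁻¹ •
              ((∫ y, ρ y * interpWeight β σ t x y) •
                  (∫ y, (ρ y * interpWeight β σ t x y * (inner ℝ y v : ℝ)) • y) -
                (inner ℝ (∫ y, (ρ y * interpWeight β σ t x y) • y) v : ℝ) •
                  (∫ y, (ρ y * interpWeight β σ t x y) • y))) :=
  conditional_mean_jacobian_general ρ β σ hβC hσC hβ0 hσ1 hβ' hσ' hρnn hρ1
end
end

section
/- Under the exponential tail bound, for every t ∈ (0,1) the density ρ_t is everywhere positive and differentiable, and its score satisfies ∇ log ρ_t(x) = A(t) (β(t) b_t(x) − β'(t) x) for all x ∈ ℝᵈ, where A(t) = (t σ(t) (β'(t)σ(t) − β(t)σ'(t)))^{−1}; moreover A(t) > 0 for all t ∈ (0,1). -/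
open MeasureTheory Real Filter Set
open scoped Topology

noncomputable section

/-- The drift `b_t(x) = β'(t) E[x⋆|x_t=x] + (σ'(t)/σ(t)) (x − β(t) E[x⋆|x_t=x])`. -/
def drift {d : ℕ} (ρ : EuclideanSpace ℝ (Fin d) → ℝ) (β σ : ℝ → ℝ) (t : ℝ)
    (x : EuclideanSpace ℝ (Fin d)) : EuclideanSpace ℝ (Fin d) :=
  deriv β t • condMean ρ β σ t x + (deriv σ t / σ t) • (x - β t • condMean ρ β σ t x)

/-- The marginal density `ρ_t` of the stochastic interpolant. -/
def marginalDensity {d : ℕ} (ρ : EuclideanSpace ℝ (Fin d) → ℝ) (β σ : ℝ → ℝ) (t : ℝ)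
    (x : EuclideanSpace ℝ (Fin d)) : ℝ :=
  (2 * Real.pi * t * σ t ^ 2) ^ (-(d : ℝ) / 2) *
    ∫ y, Real.exp (-‖x - β t • y‖ ^ 2 / (2 * t * σ t ^ 2)) * ρ y

/-! Up to a constant, `ρ_t` is the Gaussian smoothing `x ↦ ∫ exp (-‖x - β y‖² / (2tσ²)) ρ(y) dy`.
Since `r ↦ r exp (-r² / (2c))` is bounded, the `x`-gradient of the integrand is dominated by a
multiple of `ρ`, so one may differentiate under the integral sign. This gives Tweedie's formula
`∇ log ρ_t(x) = (β E[x⋆ | x_t = x] - x) / (tσ²)`, and rewriting `E[x⋆ | x_t = x]` through the drift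
is linear algebra. Monotonicity of `β` and `σ` gives `β > 0`, `σ > 0` on `(0, 1)`, whence
`A(t) > 0`. -/

lemma strictMonoOn_of_forall_deriv_pos {D : Set ℝ} (hD : Convex ℝ D) {f : ℝ → ℝ}
    (hf : ∀ x ∈ D, 0 < deriv f x) : StrictMonoOn f D :=
  strictMonoOn_of_deriv_pos hD
    (fun x hx => (differentiableAt_of_deriv_ne_zero (hf x hx).ne').continuousAt.continuousWithinAt)
    (fun x hx => hf x (interior_subset hx))

lemma strictAntiOn_of_forall_deriv_neg {D : Set ℝ} (hD : Convex ℝ D) {f : ℝ → ℝ}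
    (hf : ∀ x ∈ D, deriv f x < 0) : StrictAntiOn f D :=
  strictAntiOn_of_deriv_neg hD
    (fun x hx => (differentiableAt_of_deriv_ne_zero (hf x hx).ne).continuousAt.continuousWithinAt)
    (fun x hx => hf x (interior_subset hx))

lemma mul_exp_neg_sq_div_le_sqrt {c : ℝ} (hc : 0 < c) (u : ℝ) :
    u * exp (-u ^ 2 / (2 * c)) ≤ √c := by
  have hr : 0 < √c := Real.sqrt_pos.mpr hc
  -- AM-GM, then `1 + s ≤ exp s`
  have hamgm : u ≤ √c * (1 + u ^ 2 / (2 * c)) := by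
    have hs : √c * √c = c := mul_self_sqrt hc.le
    field_simp
    nlinarith [mul_nonneg hr.le (sq_nonneg (u - √c))]
  have hexp : u ≤ √c * exp (u ^ 2 / (2 * c)) :=
    hamgm.trans (mul_le_mul_of_nonneg_left (by linarith [add_one_le_exp (u ^ 2 / (2 * c))]) hr.le)
  calc u * exp (-u ^ 2 / (2 * c)) ≤ √c * exp (u ^ 2 / (2 * c)) * exp (-u ^ 2 / (2 * c)) :=
        mul_le_mul_of_nonneg_right hexp (exp_pos _).le
    _ = √c := by rw [mul_assoc, ← exp_add, neg_div, add_neg_cancel, exp_zero, mul_one]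

lemma exp_neg_sq_div_le_one {c : ℝ} (hc : 0 ≤ c) (u : ℝ) : exp (-u ^ 2 / (2 * c)) ≤ 1 :=
  exp_le_one_iff.mpr (div_nonpos_of_nonpos_of_nonneg (neg_nonpos.mpr (sq_nonneg u)) (by positivity))

lemma integral_mul_pos_of_pos {α : Type*} [MeasurableSpace α] {μ : Measure α} {w ρ : α → ℝ}
    (hw : ∀ y, 0 < w y) (hρ : ∀ y, 0 ≤ ρ y) (hwρ : Integrable (fun y => w y * ρ y) μ)
    (hmass : 0 < ∫ y, ρ y ∂μ) : 0 < ∫ y, w y * ρ y ∂μ := by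
  have hsupp : Function.support (fun y => w y * ρ y) = Function.support ρ := by
    ext y; simp [(hw y).ne']
  rw [integral_pos_iff_support_of_nonneg (fun y => mul_nonneg (hw y).le (hρ y)) hwρ, hsupp]
  rwa [integral_pos_iff_support_of_nonneg hρ (Integrable.of_integral_ne_zero hmass.ne')] at hmass

section GaussianKernel

variable {E : Type*} [NormedAddCommGroup E] [InnerProductSpace ℝ E]

lemma hasFDerivAt_exp_neg_norm_sub_sq (c : ℝ) (b x : E) :
    HasFDerivAt (fun x' => exp (-‖x' - b‖ ^ 2 / (2 * c)))
      (innerSL ℝ ((exp (-‖x - b‖ ^ 2 / (2 * c)) / c) • (b - x))) x := by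
  have hsq : HasFDerivAt (fun x' => -‖x' - b‖ ^ 2 / (2 * c))
      ((2 * c)⁻¹ • (-2 : ℝ) • innerSL ℝ (x - b)) x := by
    simpa [div_eq_inv_mul, two_smul] using
      ((hasFDerivAt_id x).sub_const b).norm_sq.neg.const_mul (2 * c)⁻¹
  refine ((hasDerivAt_exp _).comp_hasFDerivAt x hsq).congr_fderiv ?_
  ext w
  simp only [mul_inv_rev, map_sub, neg_smul, smul_neg, neg_apply, smul_apply, sub_apply,
    coe_innerSL_apply, smul_eq_mul, map_smul]
  ring

lemma integrable_exp_neg_norm_sub_smul_sq_mul [MeasurableSpace E] [OpensMeasurableSpace E]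
    {μ : Measure E} {ρ : E → ℝ} (hρ : Integrable ρ μ) {c : ℝ} (hc : 0 ≤ c) (a : ℝ) (x : E) :
    Integrable (fun y => exp (-‖x - a • y‖ ^ 2 / (2 * c)) * ρ y) μ :=
  hρ.bdd_mul (by fun_prop : Continuous _).aestronglyMeasurable (ae_of_all _ fun y => by
    rw [norm_of_nonneg (exp_pos _).le]; exact exp_neg_sq_div_le_one hc _)

variable [CompleteSpace E] [SecondCountableTopology E] [MeasurableSpace E] [BorelSpace E]
  {μ : Measure E}

theorem hasFDerivAt_integral_exp_neg_norm_sub_smul_sq_mul {ρ : E → ℝ} (hρ : Integrable ρ μ)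
    {c : ℝ} (hc : 0 < c) (a : ℝ) (x : E) :
    HasFDerivAt (fun x' => ∫ y, exp (-‖x' - a • y‖ ^ 2 / (2 * c)) * ρ y ∂μ)
      (innerSL ℝ (c⁻¹ • (a • ∫ y, (exp (-‖x - a • y‖ ^ 2 / (2 * c)) * ρ y) • y ∂μ
        - (∫ y, exp (-‖x - a • y‖ ^ 2 / (2 * c)) * ρ y ∂μ) • x))) x := by
  set F : E → E → ℝ := fun x' y => exp (-‖x' - a • y‖ ^ 2 / (2 * c)) * ρ y
  set G : E → E → E := fun x' y => (F x' y / c) • (a • y - x')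
  have hF : ∀ x', Integrable (F x') μ := integrable_exp_neg_norm_sub_smul_sq_mul hρ hc.le a
  have hG_le : ∀ x' y, ‖G x' y‖ ≤ √c / c * ‖ρ y‖ := by
    intro x' y
    have hlin := mul_exp_neg_sq_div_le_sqrt hc ‖x' - a • y‖
    simp only [G, F, norm_smul, norm_div, norm_mul, norm_of_nonneg (exp_pos _).le,
      norm_of_nonneg hc.le, norm_sub_rev (a • y) x']
    calc exp (-‖x' - a • y‖ ^ 2 / (2 * c)) * ‖ρ y‖ / c * ‖x' - a • y‖
        = ‖x' - a • y‖ * exp (-‖x' - a • y‖ ^ 2 / (2 * c)) / c * ‖ρ y‖ := by ring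
      _ ≤ √c / c * ‖ρ y‖ := by gcongr
  have hG_meas : AEStronglyMeasurable (G x) μ :=
    ((hF x).aestronglyMeasurable.mul_const c⁻¹).smul
      (by fun_prop : Continuous _).aestronglyMeasurable
  have hG : Integrable (G x) μ :=
    (hρ.norm.const_mul _).mono' hG_meas (ae_of_all _ (hG_le x))
  have hderiv : HasFDerivAt (fun x' => ∫ y, F x' y ∂μ) (∫ y, innerSL ℝ (G x y) ∂μ) x :=
    hasFDerivAt_integral_of_dominated_of_fderiv_le (F' := fun x' y => innerSL ℝ (G x' y))
      (bound := fun y => √c / c * ‖ρ y‖) univ_mem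
      (Eventually.of_forall fun x' => (hF x').aestronglyMeasurable) (hF x)
      ((innerSL ℝ).continuous.comp_aestronglyMeasurable hG_meas)
      (ae_of_all _ fun y x' _ => by rw [innerSL_apply_norm]; exact hG_le x' y)
      (hρ.norm.const_mul _)
      (ae_of_all _ fun y x' _ =>
        ((hasFDerivAt_exp_neg_norm_sub_sq c (a • y) x').mul_const (ρ y)).congr_fderiv (by
          rw [← map_smul, smul_smul]; congr 2; ring))
  have hG_eq : G x = fun y => c⁻¹ • (a • (F x y • y) - F x y • x) := by
    ext1 y; simp only [G]; module
  have hFx : Integrable (fun y => F x y • x) μ := (hF x).smul_const x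
  have hFy : Integrable (fun y => a • (F x y • y)) μ :=
    ((hG.smul c).add hFx).congr (ae_of_all _ fun y => by
      rw [Pi.add_apply, Pi.smul_apply, hG_eq, smul_smul, mul_inv_cancel₀ hc.ne', one_smul,
        sub_add_cancel])
  have hG_int : ∫ y, G x y ∂μ = c⁻¹ • (a • ∫ y, F x y • y ∂μ - (∫ y, F x y ∂μ) • x) := by
    rw [hG_eq, integral_smul, integral_sub hFy hFx, integral_smul, integral_smul_const]
  rwa [ContinuousLinearMap.integral_comp_comm _ hG, hG_int] at hderiv

end GaussianKernel

section Interpolant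

variable {d : ℕ} {ρ : EuclideanSpace ℝ (Fin d) → ℝ} {β σ : ℝ → ℝ} {t : ℝ}

lemma exp_neg_norm_sub_smul_sq_eq_mul_interpWeight (x y : EuclideanSpace ℝ (Fin d)) :
    exp (-‖x - β t • y‖ ^ 2 / (2 * (t * σ t ^ 2)))
      = exp (-‖x‖ ^ 2 / (2 * (t * σ t ^ 2))) * interpWeight β σ t x y := by
  rw [interpWeight, ← exp_add, norm_sub_sq_real, real_inner_smul_right, norm_smul, mul_pow,
    norm_eq_abs, sq_abs, real_inner_comm]
  ring_nf

lemma condMean_eq_integral_exp_neg_norm_sub_smul_sq (x : EuclideanSpace ℝ (Fin d)) :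
    condMean ρ β σ t x
      = (∫ y, exp (-‖x - β t • y‖ ^ 2 / (2 * (t * σ t ^ 2))) * ρ y)⁻¹
          • ∫ y, (exp (-‖x - β t • y‖ ^ 2 / (2 * (t * σ t ^ 2))) * ρ y) • y := by
  -- the factor `exp (-‖x‖² / (2tσ²))` cancels between numerator and denominator
  have hE : exp (-‖x‖ ^ 2 / (2 * (t * σ t ^ 2))) ≠ 0 := (exp_pos _).ne'
  simp_rw [exp_neg_norm_sub_smul_sq_eq_mul_interpWeight x, mul_assoc, mul_smul,
    integral_const_mul, integral_smul, smul_smul, mul_inv_rev, mul_assoc, inv_mul_cancel₀ hE,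
    mul_one, condMean, mul_comm]

lemma marginalDensity_eq (x : EuclideanSpace ℝ (Fin d)) :
    marginalDensity ρ β σ t x = (2 * π * t * σ t ^ 2) ^ (-(d : ℝ) / 2)
      * ∫ y, exp (-‖x - β t • y‖ ^ 2 / (2 * (t * σ t ^ 2))) * ρ y := by
  simp only [marginalDensity, mul_assoc 2 t]

lemma marginalDensity_pos (hρnn : ∀ y, 0 ≤ ρ y) (hmass : 0 < ∫ y, ρ y) (ht : 0 < t)
    (hσ : σ t ≠ 0) (x : EuclideanSpace ℝ (Fin d)) : 0 < marginalDensity ρ β σ t x := by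
  rw [marginalDensity_eq]
  refine mul_pos (rpow_pos_of_pos (by positivity) _) (integral_mul_pos_of_pos (fun _ => exp_pos _)
    hρnn ?_ hmass)
  exact integrable_exp_neg_norm_sub_smul_sq_mul (Integrable.of_integral_ne_zero hmass.ne')
    (by positivity) _ x

lemma hasFDerivAt_marginalDensity (hρnn : ∀ y, 0 ≤ ρ y) (hmass : 0 < ∫ y, ρ y) (ht : 0 < t)
    (hσ : σ t ≠ 0) (x : EuclideanSpace ℝ (Fin d)) :
    HasFDerivAt (marginalDensity ρ β σ t) (innerSL ℝ ((marginalDensity ρ β σ t x / (t * σ t ^ 2))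
      • (β t • condMean ρ β σ t x - x))) x := by
  have hpos := marginalDensity_pos (β := β) hρnn hmass ht hσ x
  have hderiv := (hasFDerivAt_integral_exp_neg_norm_sub_smul_sq_mul
    (Integrable.of_integral_ne_zero hmass.ne') (by positivity : 0 < t * σ t ^ 2) (β t) x).const_mul
    ((2 * π * t * σ t ^ 2) ^ (-(d : ℝ) / 2))
  rw [marginalDensity_eq] at hpos ⊢
  rw [show marginalDensity ρ β σ t = _ from funext marginalDensity_eq]
  refine hderiv.congr_fderiv ?_
  rw [← map_smul, condMean_eq_integral_exp_neg_norm_sub_smul_sq]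
  generalize (∫ y, exp (-‖x - β t • y‖ ^ 2 / (2 * (t * σ t ^ 2))) * ρ y) = Z at hpos ⊢
  have hZ : Z ≠ 0 := (pos_of_mul_pos_right hpos (rpow_pos_of_pos (by positivity) _).le).ne'
  congr 1
  match_scalars <;> field_simp

lemma gradient_log_marginalDensity (hρnn : ∀ y, 0 ≤ ρ y) (hmass : 0 < ∫ y, ρ y) (ht : 0 < t)
    (hσ : σ t ≠ 0) (x : EuclideanSpace ℝ (Fin d)) :
    gradient (fun x' => log (marginalDensity ρ β σ t x')) x
      = (t * σ t ^ 2)⁻¹ • (β t • condMean ρ β σ t x - x) := by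
  have hpos := marginalDensity_pos (β := β) hρnn hmass ht hσ x
  refine HasGradientAt.gradient (hasGradientAt_iff_hasFDerivAt.mpr
    (((hasFDerivAt_marginalDensity hρnn hmass ht hσ x).log hpos.ne').congr_fderiv ?_))
  rw [← map_smul, smul_smul, div_eq_mul_inv, ← mul_assoc, inv_mul_cancel₀ hpos.ne', one_mul]
  rfl

lemma inv_smul_condMean_sub_eq_smul_drift_sub (ht : t ≠ 0) (hσ : σ t ≠ 0)
    (hs : deriv β t * σ t - β t * deriv σ t ≠ 0) (x : EuclideanSpace ℝ (Fin d)) :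
    (t * σ t ^ 2)⁻¹ • (β t • condMean ρ β σ t x - x)
      = (t * σ t * (deriv β t * σ t - β t * deriv σ t))⁻¹
          • (β t • drift ρ β σ t x - deriv β t • x) := by
  have hdrift : β t • drift ρ β σ t x - deriv β t • x
      = ((deriv β t * σ t - β t * deriv σ t) / σ t) • (β t • condMean ρ β σ t x - x) := by
    rw [drift]
    match_scalars <;> field_simp <;> ring
  generalize deriv β t * σ t - β t * deriv σ t = D at hs hdrift ⊢
  rw [hdrift, smul_smul]
  congr 1
  field_simp

end Interpolant

theorem score_formula_general {d : ℕ} (ρ : EuclideanSpace ℝ (Fin d) → ℝ) (β σ : ℝ → ℝ)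
    (hβ0 : β 0 = 0) (hσ1 : σ 1 = 0)
    (hβ' : ∀ t ∈ Icc (0:ℝ) 1, 0 < deriv β t)
    (hσ' : ∀ t ∈ Icc (0:ℝ) 1, deriv σ t < 0)
    (hρnn : ∀ y, 0 ≤ ρ y) (hρ1 : ∫ y, ρ y = 1) :
    ∀ t ∈ Ioo (0:ℝ) 1,
      0 < (t * σ t * (deriv β t * σ t - β t * deriv σ t))⁻¹ ∧
      ∀ x : EuclideanSpace ℝ (Fin d),
        0 < marginalDensity ρ β σ t x ∧
        DifferentiableAt ℝ (fun x' => marginalDensity ρ β σ t x') x ∧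
        gradient (fun x' => Real.log (marginalDensity ρ β σ t x')) x
          = (t * σ t * (deriv β t * σ t - β t * deriv σ t))⁻¹ •
              (β t • drift ρ β σ t x - deriv β t • x) := by
  rintro t ⟨ht0, ht1⟩
  have ht : t ∈ Icc (0:ℝ) 1 := ⟨ht0.le, ht1.le⟩
  have hβt : 0 < β t := hβ0 ▸
    strictMonoOn_of_forall_deriv_pos (convex_Icc 0 1) hβ' (left_mem_Icc.2 zero_le_one) ht ht0
  have hσt : 0 < σ t := hσ1 ▸
    strictAntiOn_of_forall_deriv_neg (convex_Icc 0 1) hσ' ht (right_mem_Icc.2 zero_le_one) ht1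
  have hD : 0 < deriv β t * σ t - β t * deriv σ t := by nlinarith [hβ' t ht, hσ' t ht]
  have hmass : 0 < ∫ y, ρ y := hρ1 ▸ one_pos
  refine ⟨by positivity, fun x => ⟨marginalDensity_pos hρnn hmass ht0 hσt.ne' x,
    (hasFDerivAt_marginalDensity hρnn hmass ht0 hσt.ne' x).differentiableAt, ?_⟩⟩
  rw [gradient_log_marginalDensity hρnn hmass ht0 hσt.ne',
    inv_smul_condMean_sub_eq_smul_drift_sub ht0.ne' hσt.ne' hD.ne']

/-- under the exponential tail bound, `ρ_t` is positive and differentiable and its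
score satisfies `∇ log ρ_t(x) = A(t)(β(t) b_t(x) − β'(t) x)` with
`A(t) = (t σ(t)(β'(t)σ(t) − β(t)σ'(t)))⁻¹ > 0`. -/
theorem score_formula {d : ℕ} (ρ : EuclideanSpace ℝ (Fin d) → ℝ) (β σ : ℝ → ℝ)
    (hβC : ContDiff ℝ 1 β) (hσC : ContDiff ℝ 1 σ)
    (hβ0 : β 0 = 0) (hβ1 : β 1 = 1) (hσ0 : 0 < σ 0) (hσ1 : σ 1 = 0)
    (hβ' : ∀ t ∈ Icc (0:ℝ) 1, 0 < deriv β t)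
    (hσ' : ∀ t ∈ Icc (0:ℝ) 1, deriv σ t < 0)
    (hρnn : ∀ y, 0 ≤ ρ y) (hρ1 : ∫ y, ρ y = 1)
    (C₁ C₂ : ℝ) (hC₁ : 0 < C₁) (hC₂ : 0 < C₂)
    (htail : ∀ y, ρ y ≤ C₂ * Real.exp (-C₁ * ‖y‖)) :
    ∀ t ∈ Ioo (0:ℝ) 1,
      0 < (t * σ t * (deriv β t * σ t - β t * deriv σ t))⁻¹ ∧
      ∀ x : EuclideanSpace ℝ (Fin d),
        0 < marginalDensity ρ β σ t x ∧
        DifferentiableAt ℝ (fun x' => marginalDensity ρ β σ t x') x ∧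
        gradient (fun x' => Real.log (marginalDensity ρ β σ t x')) x
          = (t * σ t * (deriv β t * σ t - β t * deriv σ t))⁻¹ •
              (β t • drift ρ β σ t x - deriv β t • x) :=
  score_formula_general ρ β σ hβ0 hσ1 hβ' hσ' hρnn hρ1
end
end

section
/- Let ρ⋆ be the density of the Gaussian distribution N(m, C) on ℝᵈ, where m ∈ ℝᵈ and C is a symmetric positive definite d×d matrix. Then for every t ∈ (0,1) and x ∈ ℝᵈ: (i) E[x⋆ | x_t = x] = β(t) C (β(t)² C + t σ(t)² I)^{−1} (x − β(t) m) + m; (ii) lim_{t→0⁺} E[x⋆ | x_t = x] = (β'(0)/σ(0)²) C x + m; and (iii) lim_{t→0⁺} b_t(x) = β'(0) m + ((β'(0)²/σ(0)²) C + (σ'(0)/σ(0)) I) x. -/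
open MeasureTheory Set Filter
open scoped Topology

noncomputable section

/-! Multiplying the Gaussian density of `N(m, C)` by the interpolant weight, the exponential of
`-a ‖y‖² / 2 + r ⟪y, x⟫` with `a = β²/(tσ²)` and `r = β/(tσ²)`, gives again an unnormalized
Gaussian, with precision `C⁻¹ + a` and centre `c` solving `(C⁻¹ + a) c = C⁻¹ m + r x`
(completing the square). By symmetry the weighted mean of a Gaussian is its centre, and `c` is
the stated formula. As `t → 0⁺`, `β/t → β'(0)` and `β → 0`, so `a → 0`,
`(1 + a C)⁻¹ → 1` by continuity of inversion, and `r → β'(0)/σ(0)²`. -/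

open Real InnerProductSpace

lemma mul_exp_neg_mul_sq_le {b : ℝ} (hb : 0 < b) (r : ℝ) :
    r * rexp (-(b * r ^ 2)) ≤ (1 + 2 / b) * rexp (-(b / 2 * r ^ 2)) := by
  have hexp : r ≤ (1 + 2 / b) * rexp (b / 2 * r ^ 2) := by
    have h₁ := add_one_le_exp (b / 2 * r ^ 2)
    have h₂ := one_le_exp (by positivity : 0 ≤ b / 2 * r ^ 2)
    have h₃ : r ^ 2 = 2 / b * (b / 2 * r ^ 2) := by field_simp
    have h₄ : 0 ≤ 2 / b := by positivity
    nlinarith [sq_nonneg (r - 1)]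
  calc r * rexp (-(b * r ^ 2))
      ≤ (1 + 2 / b) * rexp (b / 2 * r ^ 2) * rexp (-(b * r ^ 2)) := by gcongr
    _ = (1 + 2 / b) * rexp (-(b / 2 * r ^ 2)) := by
      rw [mul_assoc, ← exp_add]; ring_nf

section GaussianIntegrals

variable {V : Type*} [NormedAddCommGroup V] [InnerProductSpace ℝ V]

def gaussianWeight (Q : V →L[ℝ] V) (a : ℝ) (v : V) : ℝ :=
  rexp (-(⟪v, Q v⟫_ℝ + a * ‖v‖ ^ 2) / 2)

lemma gaussianWeight_neg (Q : V →L[ℝ] V) (a : ℝ) (v : V) :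
    gaussianWeight Q a (-v) = gaussianWeight Q a v := by
  simp [gaussianWeight]

lemma gaussianWeight_pos (Q : V →L[ℝ] V) (a : ℝ) (v : V) : 0 < gaussianWeight Q a v :=
  exp_pos _

lemma gaussianWeight_le {Q : V →L[ℝ] V} (hQ : ∀ v, 0 ≤ ⟪v, Q v⟫_ℝ) (a : ℝ) (v : V) :
    gaussianWeight Q a v ≤ rexp (-(a / 2 * ‖v‖ ^ 2)) := by
  unfold gaussianWeight
  gcongr
  linarith [hQ v]

@[fun_prop]
lemma continuous_gaussianWeight (Q : V →L[ℝ] V) (a : ℝ) : Continuous (gaussianWeight Q a) := by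
  unfold gaussianWeight; fun_prop

variable [FiniteDimensional ℝ V] [MeasurableSpace V] [BorelSpace V]

lemma integrable_exp_neg_mul_sq_norm {b : ℝ} (hb : 0 < b) :
    Integrable (fun v : V => rexp (-(b * ‖v‖ ^ 2))) := by
  refine (GaussianFourier.integrable_cexp_neg_mul_sq_norm_add (V := V) (b := b)
    (by simpa using hb) 0 0).norm.congr (.of_forall fun v => ?_)
  simp [Complex.norm_exp, ← Complex.ofReal_pow]

lemma integrable_exp_neg_mul_sq_norm_smul {b : ℝ} (hb : 0 < b) :
    Integrable (fun v : V => rexp (-(b * ‖v‖ ^ 2)) • v) := by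
  refine ((integrable_exp_neg_mul_sq_norm (half_pos hb)).const_mul (1 + 2 / b)).mono'
    (by fun_prop) (.of_forall fun v => ?_)
  rw [norm_smul, norm_of_nonneg (exp_pos _).le, mul_comm]
  exact mul_exp_neg_mul_sq_le hb ‖v‖

lemma integrable_gaussianWeight {Q : V →L[ℝ] V} (hQ : ∀ v, 0 ≤ ⟪v, Q v⟫_ℝ) {a : ℝ}
    (ha : 0 < a) : Integrable (gaussianWeight Q a) :=
  (integrable_exp_neg_mul_sq_norm (half_pos ha)).mono' (by fun_prop) (.of_forall fun v => by
    rw [norm_of_nonneg (gaussianWeight_pos Q a v).le]; exact gaussianWeight_le hQ a v)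

lemma integrable_gaussianWeight_smul {Q : V →L[ℝ] V} (hQ : ∀ v, 0 ≤ ⟪v, Q v⟫_ℝ) {a : ℝ}
    (ha : 0 < a) : Integrable (fun v : V => gaussianWeight Q a v • v) :=
  (integrable_exp_neg_mul_sq_norm_smul (V := V) (half_pos ha)).mono (by fun_prop)
    (.of_forall fun v => by
      rw [norm_smul, norm_smul, norm_of_nonneg (gaussianWeight_pos Q a v).le,
        norm_of_nonneg (exp_pos _).le]
      exact mul_le_mul_of_nonneg_right (gaussianWeight_le hQ a v) (norm_nonneg v))

lemma integral_gaussianWeight_pos {Q : V →L[ℝ] V} (hQ : ∀ v, 0 ≤ ⟪v, Q v⟫_ℝ) {a : ℝ}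
    (ha : 0 < a) : 0 < ∫ v, gaussianWeight Q a v := by
  rw [integral_pos_iff_support_of_nonneg (fun v => (gaussianWeight_pos Q a v).le)
    (integrable_gaussianWeight hQ ha)]
  simpa [Function.support, (gaussianWeight_pos Q a _).ne'] using NeZero.ne volume

end GaussianIntegrals

section WeightedMean

variable {V : Type*} [NormedAddCommGroup V] [NormedSpace ℝ V] [MeasurableSpace V] [BorelSpace V]
  {μ : Measure V}

def weightedMean (μ : Measure V) (f : V → ℝ) : V :=
  (∫ v, f v ∂μ)⁻¹ • ∫ v, f v • v ∂μ

lemma integral_smul_self_eq_zero_of_even [μ.IsNegInvariant] {f : V → ℝ}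
    (hf : ∀ v, f (-v) = f v) : ∫ v, f v • v ∂μ = 0 := by
  have h : ∫ v, f v • v ∂μ = -∫ v, f v • v ∂μ := by
    conv_lhs => rw [← integral_neg_eq_self]
    simp only [hf, smul_neg, integral_neg]
  have h2 : (2 : ℝ) • ∫ v, f v • v ∂μ = 0 := by
    rw [two_smul]; nth_rewrite 1 [h]; exact neg_add_cancel _
  simpa using h2

lemma weightedMean_comp_sub_of_even [CompleteSpace V] [μ.IsAddRightInvariant] [μ.IsNegInvariant]
    {f : V → ℝ} (hf : ∀ v, f (-v) = f v) (hf_int : Integrable f μ)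
    (hf_smul : Integrable (fun v => f v • v) μ) (hf_ne : ∫ v, f v ∂μ ≠ 0) (c : V) :
    weightedMean μ (fun v => f (v - c)) = c := by
  have hnum : ∫ v, f (v - c) • v ∂μ = (∫ v, f v ∂μ) • c := by
    calc ∫ v, f (v - c) • v ∂μ = ∫ v, f v • (v + c) ∂μ := by
          simpa using integral_sub_right_eq_self (fun w => f w • (w + c)) c
      _ = ∫ v, f v • v ∂μ + ∫ v, f v • c ∂μ := by
          simp_rw [smul_add]; exact integral_add hf_smul (hf_int.smul_const c)
      _ = (∫ v, f v ∂μ) • c := by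
          rw [integral_smul_self_eq_zero_of_even hf, zero_add, integral_smul_const]
  rw [weightedMean, hnum, integral_sub_right_eq_self f c, smul_smul, inv_mul_cancel₀ hf_ne,
    one_smul]

end WeightedMean

section Operators

variable {V : Type*} [NormedAddCommGroup V] [InnerProductSpace ℝ V]

lemma LinearMap.IsSymmetric.det_pos [FiniteDimensional ℝ V] {T : V →ₗ[ℝ] V} (hT : T.IsSymmetric)
    (hpos : ∀ u, u ≠ 0 → 0 < ⟪T u, u⟫_ℝ) : 0 < T.det := by
  rw [hT.det_eq_prod_eigenvalues rfl]
  refine Finset.prod_pos fun i _ => ?_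
  have := hpos _ ((hT.eigenvectorBasis rfl).orthonormal.ne_zero i)
  simpa [hT.apply_eigenvectorBasis, real_inner_smul_left] using this

lemma inner_apply_self_nonneg_of_pos {C : V →L[ℝ] V} (hC : ∀ u, u ≠ 0 → 0 < ⟪C u, u⟫_ℝ) (u : V) :
    0 ≤ ⟪C u, u⟫_ℝ := by
  rcases eq_or_ne u 0 with rfl | hu
  · simp
  · exact (hC u hu).le

lemma isUnit_one_add_smul [CompleteSpace V] {C : V →L[ℝ] V} (hC : ∀ u, 0 ≤ ⟪C u, u⟫_ℝ) {a : ℝ}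
    (ha : 0 ≤ a) : IsUnit (1 + a • C) := by
  refine ContinuousLinearMap.isUnit_of_forall_le_norm_inner_map _ one_pos fun u => ?_
  have h : 0 ≤ a * ⟪C u, u⟫_ℝ := mul_nonneg ha (hC u)
  simp only [NNReal.coe_one, mul_one, add_apply, one_apply_eq_self, smul_apply, inner_add_left,
    real_inner_self_eq_norm_sq, real_inner_smul_left, Real.norm_eq_abs]
  rw [abs_of_nonneg (by positivity)]
  linarith

lemma isSymmetric_of_comp_eq_id {C Cinv : V →L[ℝ] V} (hC : (C : V →ₗ[ℝ] V).IsSymmetric)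
    (hinv : C.comp Cinv = .id ℝ V) : (Cinv : V →ₗ[ℝ] V).IsSymmetric := fun p q => by
  have hCCinv (z : V) : C (Cinv z) = z := congr($hinv z)
  simpa [hCCinv] using (hC (Cinv p) (Cinv q)).symm

lemma inner_apply_self_nonneg_of_comp_eq_id {C Cinv : V →L[ℝ] V} (hC : ∀ u, 0 ≤ ⟪C u, u⟫_ℝ)
    (hinv : C.comp Cinv = .id ℝ V) (v : V) : 0 ≤ ⟪v, Cinv v⟫_ℝ := by
  simpa [show C (Cinv v) = v from congr($hinv v)] using hC (Cinv v)

lemma inner_sub_map_sub_complete_square {Q : V →L[ℝ] V} (hQ : (Q : V →ₗ[ℝ] V).IsSymmetric)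
    {a r : ℝ} {m x c : V} (hc : Q c + a • c = Q m + r • x) (y : V) :
    ⟪y - m, Q (y - m)⟫_ℝ + a * ‖y‖ ^ 2 - 2 * r * ⟪y, x⟫_ℝ
      = ⟪y - c, Q (y - c)⟫_ℝ + a * ‖y - c‖ ^ 2 + (⟪m, Q m⟫_ℝ - ⟪c, Q c⟫_ℝ - a * ‖c‖ ^ 2) := by
  have hy := congr(⟪y, $hc⟫_ℝ)
  have hsym (u w : V) : ⟪u, Q w⟫_ℝ = ⟪w, Q u⟫_ℝ := (hQ u w).symm.trans (real_inner_comm _ _)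
  simp only [inner_add_right, real_inner_smul_right] at hy
  simp only [map_sub, inner_sub_left, inner_sub_right, norm_sub_sq_real, hsym m y, hsym c y]
  linear_combination 2 * hy

end Operators

section GaussCondMean

variable {V : Type*} [NormedAddCommGroup V] [InnerProductSpace ℝ V]

/-- `b C (b² C + s)⁻¹ (x - b m) + m`, with `s` factored out of the inverse. -/
def gaussCondMean (C : V →L[ℝ] V) (m : V) (b s : ℝ) (x : V) : V :=
  (b / s) • C (Ring.inverse (1 + (b ^ 2 / s) • C) (x - b • m)) + m

lemma inverse_apply_gaussCondMean_add {C Cinv : V →L[ℝ] V} (hinv : Cinv.comp C = .id ℝ V)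
    {m : V} {b s : ℝ} (hunit : IsUnit (1 + (b ^ 2 / s) • C)) (x : V) :
    Cinv (gaussCondMean C m b s x) + (b ^ 2 / s) • gaussCondMean C m b s x
      = Cinv m + (b / s) • x := by
  set w := Ring.inverse (1 + (b ^ 2 / s) • C) (x - b • m)
  have hw : w + (b ^ 2 / s) • C w = x - b • m := by
    simpa only [mul_apply_eq_comp, add_apply, one_apply_eq_self, smul_apply]
      using congr($(Ring.mul_inverse_cancel _ hunit) (x - b • m))
  have hCinvC (z : V) : Cinv (C z) = z := congr($hinv z)
  simp only [gaussCondMean, map_add, map_smul, hCinvC]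
  linear_combination (norm := module) (b / s) • hw

lemma exists_inverse_and_gaussCondMean_eq [CompleteSpace V] {C : V →L[ℝ] V}
    (hC : ∀ u, 0 ≤ ⟪C u, u⟫_ℝ) (m : V) {b s : ℝ} (hs : 0 < s) (x : V) :
    ∃ Minv : V →L[ℝ] V, (b ^ 2 • C + s • .id ℝ V).comp Minv = .id ℝ V ∧
      Minv.comp (b ^ 2 • C + s • .id ℝ V) = .id ℝ V ∧
      gaussCondMean C m b s x = b • C (Minv (x - b • m)) + m := by
  have hM : b ^ 2 • C + s • .id ℝ V = s • (1 + (b ^ 2 / s) • C) := by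
    rw [smul_add, smul_smul, mul_div_cancel₀ _ hs.ne', add_comm]; rfl
  have hunit := isUnit_one_add_smul hC (by positivity : 0 ≤ b ^ 2 / s)
  refine ⟨s⁻¹ • Ring.inverse (1 + (b ^ 2 / s) • C), ?_, ?_, ?_⟩
  · rw [hM, ← ContinuousLinearMap.mul_def, smul_mul_smul_comm, mul_inv_cancel₀ hs.ne', one_smul,
      Ring.mul_inverse_cancel _ hunit]; rfl
  · rw [hM, ← ContinuousLinearMap.mul_def, smul_mul_smul_comm, inv_mul_cancel₀ hs.ne', one_smul,
      Ring.inverse_mul_cancel _ hunit]; rfl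
  · simp [gaussCondMean, smul_smul, div_eq_mul_inv]

lemma tendsto_gaussCondMean [CompleteSpace V] (C : V →L[ℝ] V) (m : V) {ι : Type*} {l : Filter ι}
    {b s : ι → ℝ} {r : ℝ} (hbs : Tendsto (fun i => b i / s i) l (𝓝 r))
    (hb : Tendsto b l (𝓝 0)) (x : V) :
    Tendsto (fun i => gaussCondMean C m (b i) (s i) x) l (𝓝 (r • C x + m)) := by
  have ha : Tendsto (fun i => b i ^ 2 / s i) l (𝓝 0) := by
    simpa [sq, mul_div_assoc] using hb.mul hbs
  have hN : Tendsto (fun i => 1 + (b i ^ 2 / s i) • C) l (𝓝 1) := by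
    simpa using tendsto_const_nhds.add (ha.smul_const C)
  have hR : Tendsto (fun i => Ring.inverse (1 + (b i ^ 2 / s i) • C)) l (𝓝 1) := by
    simpa [Function.comp_def] using
      (NormedRing.inverse_continuousAt (1 : (V →L[ℝ] V)ˣ)).tendsto.comp hN
  have hu : Tendsto (fun i => x - b i • m) l (𝓝 x) := by
    simpa using tendsto_const_nhds.sub (hb.smul_const m)
  have hRu := (isBoundedBilinearMap_apply.continuous.tendsto (1, x)).comp (hR.prodMk_nhds hu)
  simpa only [gaussCondMean, Function.comp_def, one_apply_eq_self] using
    (hbs.smul ((C.continuous.tendsto x).comp hRu)).add_const m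

end GaussCondMean

lemma pos_of_deriv_pos_of_left_eq_zero {f : ℝ → ℝ} {a b : ℝ} (hf : ContinuousOn f (Icc a b))
    (hf' : ∀ t ∈ Ioo a b, 0 < deriv f t) (ha : f a = 0) {t : ℝ} (ht : t ∈ Ioc a b) : 0 < f t := by
  have hmono := strictMonoOn_of_deriv_pos (convex_Icc a b) hf (by rwa [interior_Icc])
  simpa [ha] using hmono (left_mem_Icc.2 (ht.1.le.trans ht.2)) (Ioc_subset_Icc_self ht) ht.1

lemma pos_of_deriv_neg_of_right_eq_zero {f : ℝ → ℝ} {a b : ℝ} (hf : ContinuousOn f (Icc a b))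
    (hf' : ∀ t ∈ Ioo a b, deriv f t < 0) (hb : f b = 0) {t : ℝ} (ht : t ∈ Ico a b) :
    0 < f t := by
  have hanti := strictAntiOn_of_deriv_neg (convex_Icc a b) hf (by rwa [interior_Icc])
  simpa [hb] using hanti (Ico_subset_Icc_self ht) (right_mem_Icc.2 (ht.1.trans ht.2.le)) ht.2

lemma HasDerivAt.tendsto_div_nhdsGT_zero {f : ℝ → ℝ} {f' : ℝ} (hf : HasDerivAt f f' 0)
    (h0 : f 0 = 0) : Tendsto (fun t => f t / t) (𝓝[>] 0) (𝓝 f') := by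
  simpa [h0, div_eq_inv_mul] using hf.tendsto_slope_zero_right

section EuclideanGaussian

variable {d : ℕ}

local notation "E" => EuclideanSpace ℝ (Fin d)

theorem condMean_eq_gaussCondMean {β σ : ℝ → ℝ} {m : E} {C Cinv : E →L[ℝ] E}
    (hCsym : ∀ u v : E, ⟪C u, v⟫_ℝ = ⟪u, C v⟫_ℝ) (hCpos : ∀ u : E, u ≠ 0 → 0 < ⟪C u, u⟫_ℝ)
    (hCinv1 : C.comp Cinv = .id ℝ E) (hCinv2 : Cinv.comp C = .id ℝ E) {ρ : E → ℝ}
    (hρ : ∀ y, ρ y = (√((2 * π) ^ d * LinearMap.det (C : E →ₗ[ℝ] E)))⁻¹ *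
      rexp (-⟪y - m, Cinv (y - m)⟫_ℝ / 2))
    {t : ℝ} (ht : 0 < t) (hσt : σ t ≠ 0) (hβt : β t ≠ 0) (x : E) :
    condMean ρ β σ t x = gaussCondMean C m (β t) (t * σ t ^ 2) x := by
  set s := t * σ t ^ 2
  set a := β t ^ 2 / s
  set c := gaussCondMean C m (β t) s x
  have hs : 0 < s := by positivity
  have ha : 0 < a := by positivity
  have hCnonneg := inner_apply_self_nonneg_of_pos hCpos
  have hc := inverse_apply_gaussCondMean_add hCinv2 (m := m)
    (isUnit_one_add_smul hCnonneg ha.le) x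
  have hsq := inner_sub_map_sub_complete_square (isSymmetric_of_comp_eq_id hCsym hCinv1) hc
  have hZ : 0 < (√((2 * π) ^ d * LinearMap.det (C : E →ₗ[ℝ] E)))⁻¹ := by
    have := LinearMap.IsSymmetric.det_pos (T := (C : E →ₗ[ℝ] E)) hCsym hCpos
    positivity
  set K := (√((2 * π) ^ d * LinearMap.det (C : E →ₗ[ℝ] E)))⁻¹ *
    rexp (-(⟪m, Cinv m⟫_ℝ - ⟪c, Cinv c⟫_ℝ - a * ‖c‖ ^ 2) / 2)
  have hweight (y : E) : ρ y * interpWeight β σ t x y = K * gaussianWeight Cinv a (y - c) := by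
    have hexp : -⟪y - m, Cinv (y - m)⟫_ℝ / 2 + (-β t ^ 2 * ‖y‖ ^ 2 / (2 * t * σ t ^ 2)
        + β t * ⟪y, x⟫_ℝ / (t * σ t ^ 2))
        = -(⟪m, Cinv m⟫_ℝ - ⟪c, Cinv c⟫_ℝ - a * ‖c‖ ^ 2) / 2
          + -(⟪y - c, Cinv (y - c)⟫_ℝ + a * ‖y - c‖ ^ 2) / 2 := by
      have := hsq y
      simp only [a, s] at this ⊢
      field_simp at this ⊢
      linarith
    rw [hρ, interpWeight, gaussianWeight, mul_assoc, ← exp_add, hexp, exp_add, ← mul_assoc]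
  have hK : 0 < K := by positivity
  change weightedMean volume (fun y => ρ y * interpWeight β σ t x y) = c
  simp only [hweight]
  have hCinv := inner_apply_self_nonneg_of_comp_eq_id hCnonneg hCinv1
  refine weightedMean_comp_sub_of_even (f := fun v => K * gaussianWeight Cinv a v)
    (fun v => by rw [gaussianWeight_neg]) ((integrable_gaussianWeight hCinv ha).const_mul K)
    ?_ ?_ c
  · simpa only [mul_smul] using ((integrable_gaussianWeight_smul hCinv ha).smul K :
      Integrable fun v => K • gaussianWeight Cinv a v • v)
  · rw [integral_const_mul]
    exact (mul_pos hK (integral_gaussianWeight_pos hCinv ha)).ne'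

lemma tendsto_drift_nhdsGT {ρ : E → ℝ} {β σ : ℝ → ℝ}
    (hβ : ContDiff ℝ 1 β) (hσ : ContDiff ℝ 1 σ) (hβ0 : β 0 = 0) (hσ0 : σ 0 ≠ 0)
    {x μ : E} (hμ : Tendsto (fun t => condMean ρ β σ t x) (𝓝[>] 0) (𝓝 μ)) :
    Tendsto (fun t => drift ρ β σ t x) (𝓝[>] 0) (𝓝 (deriv β 0 • μ + (deriv σ 0 / σ 0) • x)) := by
  have hcont {f : ℝ → ℝ} (hf : Continuous f) : Tendsto f (𝓝[>] 0) (𝓝 (f 0)) :=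
    hf.continuousWithinAt.tendsto
  have hβ' := hcont (hβ.continuous_deriv le_rfl)
  have hσ' := hcont (hσ.continuous_deriv le_rfl)
  have hβt := hcont hβ.continuous
  rw [hβ0] at hβt
  simpa [drift] using (hβ'.smul hμ).add ((hσ'.div (hcont hσ.continuous) hσ0).smul
    (tendsto_const_nhds.sub (hβt.smul hμ)))

end EuclideanGaussian

theorem gaussian_target_cond_mean_general {d : ℕ} (β σ : ℝ → ℝ)
    (hβC : ContDiff ℝ 1 β) (hσC : ContDiff ℝ 1 σ)
    (hβ0 : β 0 = 0) (hσ0 : 0 < σ 0) (hσ1 : σ 1 = 0)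
    (hβ' : ∀ t ∈ Icc (0:ℝ) 1, 0 < deriv β t)
    (hσ' : ∀ t ∈ Icc (0:ℝ) 1, deriv σ t < 0)
    (m : EuclideanSpace ℝ (Fin d))
    (C Cinv : EuclideanSpace ℝ (Fin d) →L[ℝ] EuclideanSpace ℝ (Fin d))
    (hCsym : ∀ u v : EuclideanSpace ℝ (Fin d), (inner ℝ (C u) v : ℝ) = (inner ℝ u (C v) : ℝ))
    (hCpos : ∀ u : EuclideanSpace ℝ (Fin d), u ≠ 0 → 0 < (inner ℝ (C u) u : ℝ))
    (hCinv1 : C.comp Cinv = ContinuousLinearMap.id ℝ (EuclideanSpace ℝ (Fin d)))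
    (hCinv2 : Cinv.comp C = ContinuousLinearMap.id ℝ (EuclideanSpace ℝ (Fin d)))
    (ρ : EuclideanSpace ℝ (Fin d) → ℝ)
    (hρ : ∀ y, ρ y =
      (Real.sqrt ((2 * Real.pi) ^ d *
          LinearMap.det (C : EuclideanSpace ℝ (Fin d) →ₗ[ℝ] EuclideanSpace ℝ (Fin d))))⁻¹ *
        Real.exp (-(inner ℝ (y - m) (Cinv (y - m)) : ℝ) / 2)) :
    (∀ t ∈ Ioo (0:ℝ) 1, ∀ x : EuclideanSpace ℝ (Fin d),
      ∃ Minv : EuclideanSpace ℝ (Fin d) →L[ℝ] EuclideanSpace ℝ (Fin d),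
        ((β t ^ 2) • C + (t * σ t ^ 2) •
            ContinuousLinearMap.id ℝ (EuclideanSpace ℝ (Fin d))).comp Minv
          = ContinuousLinearMap.id ℝ (EuclideanSpace ℝ (Fin d)) ∧
        Minv.comp ((β t ^ 2) • C + (t * σ t ^ 2) •
            ContinuousLinearMap.id ℝ (EuclideanSpace ℝ (Fin d)))
          = ContinuousLinearMap.id ℝ (EuclideanSpace ℝ (Fin d)) ∧
        condMean ρ β σ t x = β t • C (Minv (x - β t • m)) + m) ∧
    (∀ x : EuclideanSpace ℝ (Fin d),
      Tendsto (fun t => condMean ρ β σ t x) (𝓝[>] 0)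
        (𝓝 ((deriv β 0 / σ 0 ^ 2) • C x + m))) ∧
    (∀ x : EuclideanSpace ℝ (Fin d),
      Tendsto (fun t => drift ρ β σ t x) (𝓝[>] 0)
        (𝓝 (deriv β 0 • m +
          ((deriv β 0 ^ 2 / σ 0 ^ 2) • C x + (deriv σ 0 / σ 0) • x)))) := by
  have hβpos {t : ℝ} (ht : t ∈ Ioo (0:ℝ) 1) : 0 < β t :=
    pos_of_deriv_pos_of_left_eq_zero hβC.continuous.continuousOn
      (fun s hs => hβ' s (Ioo_subset_Icc_self hs)) hβ0 (Ioo_subset_Ioc_self ht)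
  have hσpos {t : ℝ} (ht : t ∈ Ioo (0:ℝ) 1) : 0 < σ t :=
    pos_of_deriv_neg_of_right_eq_zero hσC.continuous.continuousOn
      (fun s hs => hσ' s (Ioo_subset_Icc_self hs)) hσ1 (Ioo_subset_Ico_self ht)
  have hmean {t : ℝ} (ht : t ∈ Ioo (0:ℝ) 1) (x : EuclideanSpace ℝ (Fin d)) :
      condMean ρ β σ t x = gaussCondMean C m (β t) (t * σ t ^ 2) x :=
    condMean_eq_gaussCondMean hCsym hCpos hCinv1 hCinv2 hρ ht.1 (hσpos ht).ne' (hβpos ht).ne' x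
  have hlim (x : EuclideanSpace ℝ (Fin d)) : Tendsto (fun t => condMean ρ β σ t x) (𝓝[>] 0)
      (𝓝 ((deriv β 0 / σ 0 ^ 2) • C x + m)) := by
    have hβt : Tendsto β (𝓝[>] 0) (𝓝 0) := by
      simpa [hβ0] using hβC.continuous.continuousWithinAt.tendsto (s := Ioi 0) (x := 0)
    have hσt : Tendsto (fun t => σ t ^ 2) (𝓝[>] 0) (𝓝 (σ 0 ^ 2)) :=
      (hσC.continuous.continuousWithinAt.tendsto).pow 2
    have hbs : Tendsto (fun t => β t / (t * σ t ^ 2)) (𝓝[>] 0) (𝓝 (deriv β 0 / σ 0 ^ 2)) := by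
      simpa only [Pi.div_def, div_div] using ((hβC.differentiable one_ne_zero 0).hasDerivAt
        |>.tendsto_div_nhdsGT_zero hβ0).div hσt (by positivity)
    refine (tendsto_gaussCondMean C m hbs hβt x).congr' ?_
    filter_upwards [Ioo_mem_nhdsGT one_pos] with t ht using (hmean ht x).symm
  refine ⟨fun t ht x => ?_, hlim, fun x => ?_⟩
  · rw [hmean ht x]
    exact exists_inverse_and_gaussCondMean_eq (inner_apply_self_nonneg_of_pos hCpos) m
      (mul_pos ht.1 (pow_pos (hσpos ht) 2)) x
  · convert tendsto_drift_nhdsGT hβC hσC hβ0 hσ0.ne' (hlim x) using 2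
    module

/-- for a Gaussian target `N(m, C)`:
(i) `E[x⋆|x_t=x] = β(t) C (β(t)²C + tσ(t)²I)⁻¹ (x − β(t)m) + m`;
(ii) `E[x⋆|x_t=x] → (β'(0)/σ(0)²) C x + m` as `t → 0⁺`;
(iii) `b_t(x) → β'(0) m + ((β'(0)²/σ(0)²) C + (σ'(0)/σ(0)) I) x` as `t → 0⁺`. -/
theorem gaussian_target_cond_mean {d : ℕ} (β σ : ℝ → ℝ)
    (hβC : ContDiff ℝ 1 β) (hσC : ContDiff ℝ 1 σ)
    (hβ0 : β 0 = 0) (hβ1 : β 1 = 1) (hσ0 : 0 < σ 0) (hσ1 : σ 1 = 0)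
    (hβ' : ∀ t ∈ Icc (0:ℝ) 1, 0 < deriv β t)
    (hσ' : ∀ t ∈ Icc (0:ℝ) 1, deriv σ t < 0)
    (m : EuclideanSpace ℝ (Fin d))
    (C Cinv : EuclideanSpace ℝ (Fin d) →L[ℝ] EuclideanSpace ℝ (Fin d))
    (hCsym : ∀ u v : EuclideanSpace ℝ (Fin d), (inner ℝ (C u) v : ℝ) = (inner ℝ u (C v) : ℝ))
    (hCpos : ∀ u : EuclideanSpace ℝ (Fin d), u ≠ 0 → 0 < (inner ℝ (C u) u : ℝ))
    (hCinv1 : C.comp Cinv = ContinuousLinearMap.id ℝ (EuclideanSpace ℝ (Fin d)))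
    (hCinv2 : Cinv.comp C = ContinuousLinearMap.id ℝ (EuclideanSpace ℝ (Fin d)))
    (ρ : EuclideanSpace ℝ (Fin d) → ℝ)
    (hρ : ∀ y, ρ y =
      (Real.sqrt ((2 * Real.pi) ^ d *
          LinearMap.det (C : EuclideanSpace ℝ (Fin d) →ₗ[ℝ] EuclideanSpace ℝ (Fin d))))⁻¹ *
        Real.exp (-(inner ℝ (y - m) (Cinv (y - m)) : ℝ) / 2)) :
    (∀ t ∈ Ioo (0:ℝ) 1, ∀ x : EuclideanSpace ℝ (Fin d),
      ∃ Minv : EuclideanSpace ℝ (Fin d) →L[ℝ] EuclideanSpace ℝ (Fin d),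
        ((β t ^ 2) • C + (t * σ t ^ 2) •
            ContinuousLinearMap.id ℝ (EuclideanSpace ℝ (Fin d))).comp Minv
          = ContinuousLinearMap.id ℝ (EuclideanSpace ℝ (Fin d)) ∧
        Minv.comp ((β t ^ 2) • C + (t * σ t ^ 2) •
            ContinuousLinearMap.id ℝ (EuclideanSpace ℝ (Fin d)))
          = ContinuousLinearMap.id ℝ (EuclideanSpace ℝ (Fin d)) ∧
        condMean ρ β σ t x = β t • C (Minv (x - β t • m)) + m) ∧
    (∀ x : EuclideanSpace ℝ (Fin d),
      Tendsto (fun t => condMean ρ β σ t x) (𝓝[>] 0)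
        (𝓝 ((deriv β 0 / σ 0 ^ 2) • C x + m))) ∧
    (∀ x : EuclideanSpace ℝ (Fin d),
      Tendsto (fun t => drift ρ β σ t x) (𝓝[>] 0)
        (𝓝 (deriv β 0 • m +
          ((deriv β 0 ^ 2 / σ 0 ^ 2) • C x + (deriv σ 0 / σ 0) • x)))) :=
  gaussian_target_cond_mean_general β σ hβC hσC hβ0 hσ0 hσ1 hβ' hσ' m C Cinv hCsym hCpos hCinv1
    hCinv2 ρ hρ
end
end
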